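/- Let {M_n}_{n≥1} ⊂ GL(2,2ℤ) be expanding matrices with |det(M_n)| = 4 for all n, let t be an odd integer with |t| > 1, and D_n = t·D with D = {(0,0),(1,0),(0,1),(-1,-1)}. Let μ be the infinite convolution μ = δ_{M₁⁻¹D₁} * δ_{M₁⁻¹M₂⁻¹D₂} * ⋯. Then the zero set of the Fourier transform μ̂ equals (1/t)(ℤ² \ {0}), and consequently the integer periodic zero set Z(μ) = {ξ ∈ ℝ² : μ̂(ξ + k) = 0 for all k ∈ ℤ²} contains (1/t)·𝔽̊_{|t|} and is nonempty. -/

import Mathlib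

open MeasureTheory Filter Topology Complex Matrix ENNReal

noncomputable section

/-- Convolution of two measures on `ℝ²`. -/
def conv2 (μ ν : Measure (Fin 2 → ℝ)) : Measure (Fin 2 → ℝ) :=
  (μ.prod ν).map (fun q => q.1 + q.2)

/-- The digit set `𝒟 = {(0,0),(1,0),(0,1),(-1,-1)}` listed as vectors. -/
def scrDv : Fin 4 → (Fin 2 → ℝ) := ![![0, 0], ![1, 0], ![0, 1], ![-1, -1]]

/-- `M₁⁻¹ M₂⁻¹ ⋯ M_n⁻¹` (real inverses of the integer matrices `M j`). -/
def BinvZ (M : ℕ → Matrix (Fin 2) (Fin 2) ℤ) (n : ℕ) : Matrix (Fin 2) (Fin 2) ℝ :=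
  (((List.range n).map (fun j => ((M j).map (Int.cast : ℤ → ℝ))⁻¹)).prod)

/-- Finite convolution `ν 0 * ν 1 * ⋯ * ν (n-1)`. -/
def partialConv (ν : ℕ → Measure (Fin 2 → ℝ)) (n : ℕ) : Measure (Fin 2 → ℝ) :=
  ((List.range n).map ν).foldl conv2 (Measure.dirac 0)

/-- Fourier transform of a measure on `ℝ²`. -/
def FT2 (μ : Measure (Fin 2 → ℝ)) (ξ : Fin 2 → ℝ) : ℂ :=
  ∫ x, Complex.exp (2 * (Real.pi : ℂ) * Complex.I * ((∑ i, x i * ξ i : ℝ) : ℂ)) ∂μ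

end

noncomputable section
namespace S11


def eC (r : ℝ) : ℂ := Complex.exp (2 * (Real.pi : ℂ) * Complex.I * (r : ℂ))

lemma eC_eq (r : ℝ) : eC r = Complex.exp (((2 * Real.pi * r : ℝ) : ℂ) * Complex.I) := by
  rw [eC]; congr 1; push_cast; ring

lemma eC_zero : eC 0 = 1 := by simp [eC]

lemma eC_add (r s : ℝ) : eC (r + s) = eC r * eC s := by
  rw [eC, eC, eC, ← Complex.exp_add]; congr 1; push_cast; ring

lemma norm_eC (r : ℝ) : ‖eC r‖ = 1 := by
  rw [eC_eq, Complex.norm_exp_ofReal_mul_I]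

lemma eC_re_im (r : ℝ) : eC r = ((Real.cos (2 * Real.pi * r) : ℝ) : ℂ)
    + ((Real.sin (2 * Real.pi * r) : ℝ) : ℂ) * Complex.I := by
  rw [eC_eq, Complex.exp_mul_I, Complex.ofReal_cos, Complex.ofReal_sin]

lemma eC_int (n : ℤ) : eC (n : ℝ) = 1 := by
  rw [eC, show 2 * (Real.pi : ℂ) * Complex.I * ((n : ℝ) : ℂ)
      = (n : ℂ) * (2 * (Real.pi : ℂ) * Complex.I) by push_cast; ring]
  exact Complex.exp_int_mul_two_pi_mul_I n

lemma eC_half : eC (1 / 2) = -1 := by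
  rw [eC, show 2 * (Real.pi : ℂ) * Complex.I * (((1 : ℝ) / 2 : ℝ) : ℂ)
      = (Real.pi : ℂ) * Complex.I by push_cast; ring]
  exact Complex.exp_pi_mul_I

def sgn (p : ℤ) : ℂ := if Even p then 1 else -1

lemma eC_halfInt (p : ℤ) : eC ((p : ℝ) / 2) = sgn p := by
  rcases Int.even_or_odd p with ⟨m, hm⟩ | ⟨m, hm⟩
  · rw [show ((p : ℝ)) / 2 = ((m : ℤ) : ℝ) by rw [hm]; push_cast; ring, eC_int, sgn,
      if_pos ⟨m, hm⟩]
  · rw [show ((p : ℝ)) / 2 = ((m : ℤ) : ℝ) + 1 / 2 by rw [hm]; push_cast; ring,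
      eC_add, eC_int, eC_half, sgn, if_neg (by rw [hm]; intro ⟨c, hc⟩; omega)]
    ring

lemma sgn_neg (p : ℤ) : sgn (-p) = sgn p := by simp [sgn, even_neg]

lemma sgn_add (p q : ℤ) : sgn (p + q) = sgn p * sgn q := by
  by_cases hp : Even p <;> by_cases hq : Even q <;>
    simp [sgn, hp, hq, Int.even_add] <;> tauto

def quadSum (a b : ℝ) : ℂ := 1 + eC a + eC b + eC (-(a + b))

lemma quadSum_zero {p q : ℤ} (h : Odd p ∨ Odd q) :
    quadSum ((p : ℝ) / 2) ((q : ℝ) / 2) = 0 := by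
  have h3 : -((p : ℝ) / 2 + (q : ℝ) / 2) = ((-(p + q) : ℤ) : ℝ) / 2 := by push_cast; ring
  rw [quadSum, h3, eC_halfInt, eC_halfInt, eC_halfInt, sgn_neg, sgn_add]
  rcases h with h | h
  · rw [show sgn p = -1 from if_neg (Int.not_even_iff_odd.mpr h)]; ring
  · rw [show sgn q = -1 from if_neg (Int.not_even_iff_odd.mpr h)]; ring

lemma cos_id (α β : ℝ) : 1 + Real.cos (2 * α) + Real.cos (2 * β) + Real.cos (2 * α + 2 * β)
    = 4 * (Real.cos α * Real.cos β * Real.cos (α + β)) := by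
  rw [show 2 * α + 2 * β = 2 * (α + β) by ring, Real.cos_two_mul, Real.cos_two_mul,
    Real.cos_two_mul, Real.cos_add]
  linear_combination (2 * Real.sin β ^ 2) * Real.sin_sq_add_cos_sq α
    + (2 - 2 * Real.cos α ^ 2) * Real.sin_sq_add_cos_sq β

lemma sin_id (α β : ℝ) : Real.sin (2 * α) + Real.sin (2 * β) - Real.sin (2 * α + 2 * β)
    = 4 * (Real.sin α * Real.sin β * Real.sin (α + β)) := by
  rw [show 2 * α + 2 * β = 2 * (α + β) by ring, Real.sin_two_mul, Real.sin_two_mul,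
    Real.sin_two_mul, Real.sin_add, Real.cos_add]
  linear_combination (-2 * Real.sin β * Real.cos β) * Real.sin_sq_add_cos_sq α
    + (-2 * Real.sin α * Real.cos α) * Real.sin_sq_add_cos_sq β

lemma quadSum_eq (a b : ℝ) : quadSum a b =
    ((1 + Real.cos (2 * Real.pi * a) + Real.cos (2 * Real.pi * b)
      + Real.cos (2 * Real.pi * a + 2 * Real.pi * b) : ℝ) : ℂ)
    + ((Real.sin (2 * Real.pi * a) + Real.sin (2 * Real.pi * b)
      - Real.sin (2 * Real.pi * a + 2 * Real.pi * b) : ℝ) : ℂ) * Complex.I := by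
  rw [quadSum, eC_re_im, eC_re_im, eC_re_im,
    show 2 * Real.pi * (-(a + b)) = -(2 * Real.pi * a + 2 * Real.pi * b) by ring,
    Real.cos_neg, Real.sin_neg]
  push_cast; ring

lemma quadSum_zero_imp {a b : ℝ} (h : quadSum a b = 0) :
    ∃ p q : ℤ, (Odd p ∨ Odd q) ∧ a = (p : ℝ) / 2 ∧ b = (q : ℝ) / 2 := by
  have hpi := Real.pi_ne_zero
  rw [quadSum_eq] at h
  set X := 1 + Real.cos (2 * Real.pi * a) + Real.cos (2 * Real.pi * b)
      + Real.cos (2 * Real.pi * a + 2 * Real.pi * b) with hXdef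
  set Y := Real.sin (2 * Real.pi * a) + Real.sin (2 * Real.pi * b)
      - Real.sin (2 * Real.pi * a + 2 * Real.pi * b) with hYdef
  have hre : X = 0 := by
    have := congrArg Complex.re h
    simp only [Complex.add_re, Complex.ofReal_re, Complex.mul_re, Complex.ofReal_im,
      Complex.I_re, Complex.I_im, Complex.zero_re] at this
    linarith
  have him : Y = 0 := by
    have := congrArg Complex.im h
    simp only [Complex.add_im, Complex.ofReal_im, Complex.mul_im, Complex.ofReal_re,
      Complex.I_re, Complex.I_im, Complex.zero_im] at this
    linarith
  rw [hXdef] at hre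
  rw [hYdef] at him
  set α := Real.pi * a with hα
  set β := Real.pi * b with hβ
  have h2a : 2 * Real.pi * a = 2 * α := by rw [hα]; ring
  have h2b : 2 * Real.pi * b = 2 * β := by rw [hβ]; ring
  rw [h2a, h2b] at hre him
  rw [cos_id] at hre
  rw [sin_id] at him
  -- helpers
  have sin_ne_of_cos_eq : ∀ x : ℝ, Real.cos x = 0 → Real.sin x ≠ 0 := by
    intro x hc hs
    have := Real.sin_sq_add_cos_sq x
    rw [hc, hs] at this; norm_num at this
  have cos_case : ∀ x : ℝ, Real.cos x = 0 → ∃ k : ℤ, x = (2 * k + 1) * Real.pi / 2 :=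
    fun x hx => Real.cos_eq_zero_iff.mp hx
  -- from hre : product = 0
  have hre0 : Real.cos α = 0 ∨ Real.cos β = 0 ∨ Real.cos (α + β) = 0 := by
    have h4 : Real.cos α * Real.cos β * Real.cos (α + β) = 0 := by linarith
    rcases mul_eq_zero.mp h4 with h' | h'
    · rcases mul_eq_zero.mp h' with h'' | h''
      · exact Or.inl h''
      · exact Or.inr (Or.inl h'')
    · exact Or.inr (Or.inr h')
  have him0 : Real.sin α * Real.sin β * Real.sin (α + β) = 0 := by linarith
  -- conversion: α = π a →  a from equation
  have conv : ∀ (x : ℝ) (k : ℤ), Real.pi * x = (2 * k + 1) * Real.pi / 2 → x = (2 * k + 1 : ℤ) / 2 := by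
    intro x k hk
    have : Real.pi * x = Real.pi * ((2 * (k : ℝ) + 1) / 2) := by rw [hk]; ring
    have := mul_left_cancel₀ hpi this
    rw [this]; push_cast; ring
  have convs : ∀ (x : ℝ) (k : ℤ), (k : ℝ) * Real.pi = Real.pi * x → x = ((2 * k : ℤ) : ℝ) / 2 := by
    intro x k hk
    have : Real.pi * x = Real.pi * k := by rw [← hk]; ring
    have := mul_left_cancel₀ hpi this
    rw [this]; push_cast; ring
  rcases hre0 with hc | hc | hc
  · obtain ⟨k, hk⟩ := cos_case _ hc
    have ha : a = ((2 * k + 1 : ℤ) : ℝ) / 2 := by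
      exact conv a k (by rw [← hα]; exact_mod_cast hk)
    have hsne := sin_ne_of_cos_eq _ hc
    have : Real.sin β * Real.sin (α + β) = 0 := by
      rcases mul_eq_zero.mp him0 with h' | h'
      · rcases mul_eq_zero.mp h' with h'' | h''
        · exact absurd h'' hsne
        · rw [h'']; ring
      · rw [h']; ring
    rcases mul_eq_zero.mp this with h' | h'
    · obtain ⟨n, hn⟩ := Real.sin_eq_zero_iff.mp h'
      have hb : b = ((2 * n : ℤ) : ℝ) / 2 := convs b n (by rw [← hβ]; exact hn)
      exact ⟨2 * k + 1, 2 * n, Or.inl ⟨k, by ring⟩, ha, hb⟩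
    · obtain ⟨n, hn⟩ := Real.sin_eq_zero_iff.mp h'
      have hab : a + b = ((2 * n : ℤ) : ℝ) / 2 := by
        have : Real.pi * (a + b) = α + β := by rw [hα, hβ]; ring
        have := convs (a + b) n (by rw [this]; exact hn)
        exact this
      refine ⟨2 * k + 1, 2 * n - (2 * k + 1), Or.inl ⟨k, by ring⟩, ha, ?_⟩
      push_cast at hab ha ⊢; linarith
  · obtain ⟨k, hk⟩ := cos_case _ hc
    have hb : b = ((2 * k + 1 : ℤ) : ℝ) / 2 := by
      exact conv b k (by rw [← hβ]; exact_mod_cast hk)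
    have hsne := sin_ne_of_cos_eq _ hc
    have : Real.sin α * Real.sin (α + β) = 0 := by
      rcases mul_eq_zero.mp him0 with h' | h'
      · rcases mul_eq_zero.mp h' with h'' | h''
        · rw [h'']; ring
        · exact absurd h'' hsne
      · rw [h']; ring
    rcases mul_eq_zero.mp this with h' | h'
    · obtain ⟨n, hn⟩ := Real.sin_eq_zero_iff.mp h'
      have ha : a = ((2 * n : ℤ) : ℝ) / 2 := convs a n (by rw [← hα]; exact hn)
      exact ⟨2 * n, 2 * k + 1, Or.inr ⟨k, by ring⟩, ha, hb⟩
    · obtain ⟨n, hn⟩ := Real.sin_eq_zero_iff.mp h'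
      have hab : a + b = ((2 * n : ℤ) : ℝ) / 2 := by
        have heq : Real.pi * (a + b) = α + β := by rw [hα, hβ]; ring
        exact convs (a + b) n (by rw [heq]; exact hn)
      refine ⟨2 * n - (2 * k + 1), 2 * k + 1, Or.inr ⟨k, by ring⟩, ?_, hb⟩
      push_cast at hab hb ⊢; linarith
  · obtain ⟨k, hk⟩ := cos_case _ hc
    have hab : a + b = ((2 * k + 1 : ℤ) : ℝ) / 2 := by
      have heq : Real.pi * (a + b) = α + β := by rw [hα, hβ]; ring
      exact conv (a + b) k (by rw [heq]; exact_mod_cast hk)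
    have hsne := sin_ne_of_cos_eq _ hc
    have : Real.sin α * Real.sin β = 0 := by
      rcases mul_eq_zero.mp him0 with h' | h'
      · exact h'
      · exact absurd h' hsne
    rcases mul_eq_zero.mp this with h' | h'
    · obtain ⟨n, hn⟩ := Real.sin_eq_zero_iff.mp h'
      have ha : a = ((2 * n : ℤ) : ℝ) / 2 := convs a n (by rw [← hα]; exact hn)
      refine ⟨2 * n, 2 * k + 1 - 2 * n, Or.inr ⟨k - n, by ring⟩, ha, ?_⟩
      push_cast at hab ha ⊢; linarith
    · obtain ⟨n, hn⟩ := Real.sin_eq_zero_iff.mp h'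
      have hb : b = ((2 * n : ℤ) : ℝ) / 2 := convs b n (by rw [← hβ]; exact hn)
      refine ⟨2 * k + 1 - 2 * n, 2 * n, Or.inl ⟨k - n, by ring⟩, ?_, hb⟩
      push_cast at hab hb ⊢; linarith



-- ===================== measure-theory part =====================

abbrev E2 := Fin 2 → ℝ

def dot (x ξ : E2) : ℝ := ∑ i, x i * ξ i

lemma FT2_def (μ : Measure E2) (ξ : E2) : FT2 μ ξ = ∫ x, eC (dot x ξ) ∂μ := rfl

lemma dot_add_left (x y ξ : E2) : dot (x + y) ξ = dot x ξ + dot y ξ := by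
  simp [dot, add_mul, Finset.sum_add_distrib]

lemma dot_zero_left (ξ : E2) : dot 0 ξ = 0 := by simp [dot]

lemma continuous_eC : Continuous eC := by
  unfold eC
  exact Complex.continuous_exp.comp (continuous_const.mul Complex.continuous_ofReal)

lemma continuous_dotl (ξ : E2) : Continuous fun x => dot x ξ := by
  unfold dot
  exact continuous_finset_sum _ fun i _ => (continuous_apply i).mul continuous_const

lemma continuous_dotr (x : E2) : Continuous fun ξ => dot x ξ := by
  unfold dot
  exact continuous_finset_sum _ fun i _ => continuous_const.mul (continuous_apply i)

lemma integrable_bdd {μ : Measure E2} [IsFiniteMeasure μ] {β : Type*} [NormedAddCommGroup β]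
    {f : E2 → β} (hf : Continuous f) (C : ℝ) (hC : ∀ x, ‖f x‖ ≤ C) : Integrable f μ :=
  (integrable_const C).mono' hf.aestronglyMeasurable (Filter.Eventually.of_forall hC)

lemma integrable_eC {μ : Measure E2} [IsFiniteMeasure μ] (ξ : E2) :
    Integrable (fun x => eC (dot x ξ)) μ :=
  integrable_bdd (continuous_eC.comp (continuous_dotl ξ)) 1 fun x => (norm_eC _).le

lemma isProbabilityMeasure_conv2 (μ ν : Measure E2) [IsProbabilityMeasure μ]
    [IsProbabilityMeasure ν] : IsProbabilityMeasure (conv2 μ ν) :=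
  Measure.isProbabilityMeasure_map ((measurable_fst.add measurable_snd).aemeasurable)

lemma FT2_conv2 (μ ν : Measure E2) [IsProbabilityMeasure μ] [IsProbabilityMeasure ν] (ξ : E2) :
    FT2 (conv2 μ ν) ξ = FT2 μ ξ * FT2 ν ξ := by
  have hmeas : AEStronglyMeasurable (fun x : E2 => eC (dot x ξ))
      (Measure.map (fun q : E2 × E2 => q.1 + q.2) (μ.prod ν)) :=
    ((show Continuous fun x : E2 => eC (dot x ξ) from
      continuous_eC.comp (continuous_dotl ξ))).aestronglyMeasurable
  rw [FT2_def, conv2, integral_map (by exact (measurable_fst.add measurable_snd).aemeasurable : AEMeasurable (fun q : E2 × E2 => q.1 + q.2) (μ.prod ν)) hmeas]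
  have : ∀ q : E2 × E2, eC (dot (q.1 + q.2) ξ) = eC (dot q.1 ξ) * eC (dot q.2 ξ) := by
    intro q; rw [dot_add_left, eC_add]
  simp_rw [this]
  rw [integral_prod_mul (fun x => eC (dot x ξ)) (fun y => eC (dot y ξ))]
  rfl

lemma partialConv_zero (ν : ℕ → Measure E2) : partialConv ν 0 = Measure.dirac 0 := by
  simp [partialConv]

lemma partialConv_succ (ν : ℕ → Measure E2) (n : ℕ) :
    partialConv ν (n + 1) = conv2 (partialConv ν n) (ν n) := by
  rw [partialConv, partialConv, List.range_succ, List.map_append, List.foldl_append]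
  rfl

lemma isProbabilityMeasure_partialConv {ν : ℕ → Measure E2}
    (hν : ∀ j, IsProbabilityMeasure (ν j)) (n : ℕ) :
    IsProbabilityMeasure (partialConv ν n) := by
  induction n with
  | zero => rw [partialConv_zero]; infer_instance
  | succ n ih =>
    rw [partialConv_succ]
    haveI := ih; haveI := hν n
    exact isProbabilityMeasure_conv2 _ _

lemma FT2_dirac (p ξ : E2) : FT2 (Measure.dirac p) ξ = eC (dot p ξ) := by
  rw [FT2_def]; exact integral_dirac _ _

lemma FT2_partialConv {ν : ℕ → Measure E2} (hν : ∀ j, IsProbabilityMeasure (ν j)) (n : ℕ)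
    (ξ : E2) : FT2 (partialConv ν n) ξ = ∏ j ∈ Finset.range n, FT2 (ν j) ξ := by
  induction n with
  | zero =>
    rw [partialConv_zero, FT2_dirac, dot_zero_left, eC_zero, Finset.range_zero,
      Finset.prod_empty]
  | succ n ih =>
    haveI := isProbabilityMeasure_partialConv hν n
    haveI := hν n
    rw [partialConv_succ, FT2_conv2, ih, Finset.prod_range_succ]

lemma FT2_re_im (μ : Measure E2) [IsProbabilityMeasure μ] (ξ : E2) :
    FT2 μ ξ = ((∫ x, Real.cos (2 * Real.pi * dot x ξ) ∂μ : ℝ) : ℂ)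
      + ((∫ x, Real.sin (2 * Real.pi * dot x ξ) ∂μ : ℝ) : ℂ) * Complex.I := by
  rw [FT2_def]
  have h1 : Integrable (fun x => ((Real.cos (2 * Real.pi * dot x ξ) : ℝ) : ℂ)) μ := by
    refine integrable_bdd ?_ 1 ?_
    · exact Complex.continuous_ofReal.comp (Real.continuous_cos.comp
        (continuous_const.mul (continuous_dotl ξ)))
    · intro x
      rw [Complex.norm_real, Real.norm_eq_abs]
      exact Real.abs_cos_le_one _
  have h2 : Integrable (fun x => ((Real.sin (2 * Real.pi * dot x ξ) : ℝ) : ℂ) * Complex.I) μ := by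
    refine integrable_bdd ?_ 1 ?_
    · exact (Complex.continuous_ofReal.comp (Real.continuous_sin.comp
        (continuous_const.mul (continuous_dotl ξ)))).mul continuous_const
    · intro x
      rw [norm_mul, Complex.norm_I, mul_one, Complex.norm_real, Real.norm_eq_abs]
      exact Real.abs_sin_le_one _
  simp_rw [eC_re_im]
  rw [integral_add h1 h2, integral_mul_const]
  congr 1
  · exact integral_ofReal
  · congr 1
    exact integral_ofReal

lemma FT2_re (μ : Measure E2) [IsProbabilityMeasure μ] (ξ : E2) :
    (FT2 μ ξ).re = ∫ x, Real.cos (2 * Real.pi * dot x ξ) ∂μ := by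
  rw [FT2_re_im]; simp

lemma continuous_FT2 (μ : Measure E2) [IsProbabilityMeasure μ] : Continuous (FT2 μ) := by
  refine continuous_of_dominated (bound := fun _ => 1) ?_ ?_ (integrable_const 1) ?_
  · intro ξ; exact (continuous_eC.comp (continuous_dotl ξ)).aestronglyMeasurable
  · intro ξ; exact Filter.Eventually.of_forall fun x => (norm_eC _).le
  · exact Filter.Eventually.of_forall fun x => continuous_eC.comp (continuous_dotr x)

lemma FT2_zero (μ : Measure E2) [IsProbabilityMeasure μ] : FT2 μ 0 = 1 := by
  rw [FT2_def]
  have : ∀ x : E2, eC (dot x 0) = 1 := by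
    intro x
    rw [show dot x 0 = 0 by simp [dot], eC_zero]
  simp_rw [this]
  simp

lemma cos_doubling_pt (θ : ℝ) : 1 - Real.cos (2 * θ) ≤ 4 * (1 - Real.cos θ) := by
  rw [Real.cos_two_mul]
  nlinarith [Real.neg_one_le_cos θ, Real.cos_le_one θ]

lemma doubling (μ : Measure E2) [IsProbabilityMeasure μ] (η : E2) :
    1 - (FT2 μ (fun i => 2 * η i)).re ≤ 4 * (1 - (FT2 μ η).re) := by
  rw [FT2_re, FT2_re]
  have hdot : ∀ x : E2, dot x (fun i => 2 * η i) = 2 * dot x η := by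
    intro x; simp [dot, Fin.sum_univ_two]; ring
  have hcont : ∀ ζ : E2, Continuous fun x : E2 => Real.cos (2 * Real.pi * dot x ζ) :=
    fun ζ => Real.continuous_cos.comp (continuous_const.mul (continuous_dotl ζ))
  have hc1 : Integrable (fun x => Real.cos (2 * Real.pi * dot x (fun i => 2 * η i))) μ :=
    integrable_bdd (hcont _) 1
      (fun x => by rw [Real.norm_eq_abs]; exact Real.abs_cos_le_one _)
  have hc2 : Integrable (fun x => Real.cos (2 * Real.pi * dot x η)) μ :=
    integrable_bdd (hcont _) 1
      (fun x => by rw [Real.norm_eq_abs]; exact Real.abs_cos_le_one _)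
  have key : ∫ x, (1 - Real.cos (2 * Real.pi * dot x (fun i => 2 * η i))) ∂μ
      ≤ ∫ x, 4 * (1 - Real.cos (2 * Real.pi * dot x η)) ∂μ := by
    refine integral_mono ((integrable_const 1).sub hc1)
      (((integrable_const 1).sub hc2).const_mul 4) fun x => ?_
    simp only [Pi.sub_apply]
    have harg : 2 * Real.pi * dot x (fun i => 2 * η i) = 2 * (2 * Real.pi * dot x η) := by
      rw [hdot]; ring
    rw [harg]
    exact cos_doubling_pt _
  rw [integral_sub (integrable_const 1) hc1, integral_const_mul,
    integral_sub (integrable_const 1) hc2, integral_const] at key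
  simpa [measure_univ] using key

lemma doubling_pow (μ : Measure E2) [IsProbabilityMeasure μ] (k : ℕ) (η : E2) :
    1 - (FT2 μ (fun i => 2 ^ k * η i)).re ≤ 4 ^ k * (1 - (FT2 μ η).re) := by
  induction k with
  | zero => simp
  | succ k ih =>
    have h1 := doubling μ (fun i => 2 ^ k * η i)
    have heq : (fun i => 2 * (2 ^ k * η i)) = (fun i => 2 ^ (k + 1) * η i) := by
      funext i; ring
    rw [heq] at h1
    calc 1 - (FT2 μ (fun i => 2 ^ (k + 1) * η i)).re
        ≤ 4 * (1 - (FT2 μ (fun i => 2 ^ k * η i)).re) := h1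
      _ ≤ 4 * (4 ^ k * (1 - (FT2 μ η).re)) := by linarith
      _ = 4 ^ (k + 1) * (1 - (FT2 μ η).re) := by ring

-- ===================== matrix part =====================

lemma dot_smul_left (c : ℝ) (x ξ : E2) : dot (c • x) ξ = c * dot x ξ := by
  simp [dot, Fin.sum_univ_two]; ring

lemma dot_mulVec (G : Matrix (Fin 2) (Fin 2) ℝ) (v ξ : E2) :
    dot (G.mulVec v) ξ = dot v (Gᵀ.mulVec ξ) := by
  simp [dot, Matrix.mulVec, dotProduct, Matrix.transpose_apply, Fin.sum_univ_two]
  ring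

def Mb (M : ℕ → Matrix (Fin 2) (Fin 2) ℤ) (n : ℕ) : Matrix (Fin 2) (Fin 2) ℤ :=
  Matrix.of fun i j => M n i j / 2

def Cm (M : ℕ → Matrix (Fin 2) (Fin 2) ℤ) (n : ℕ) : Matrix (Fin 2) (Fin 2) ℤ :=
  (Mb M n).det • (Mb M n).adjugate

def NP (M : ℕ → Matrix (Fin 2) (Fin 2) ℤ) (n : ℕ) : Matrix (Fin 2) (Fin 2) ℤ :=
  ((List.range n).map (Cm M)).prod

def QP (M : ℕ → Matrix (Fin 2) (Fin 2) ℤ) (n : ℕ) : Matrix (Fin 2) (Fin 2) ℤ :=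
  (((List.range n).map (Mb M)).reverse).prod

variable {M : ℕ → Matrix (Fin 2) (Fin 2) ℤ}

lemma M_eq (heven : ∀ n i j, 2 ∣ M n i j) (n : ℕ) : M n = (2 : ℤ) • Mb M n := by
  ext i j
  obtain ⟨c, hc⟩ := heven n i j
  simp only [Matrix.smul_apply, Mb, Matrix.of_apply, smul_eq_mul, hc]
  omega

lemma det_Mb_sq (heven : ∀ n i j, 2 ∣ M n i j)
    (hdet : ∀ n, (M n).det = 4 ∨ (M n).det = -4) (n : ℕ) :
    (Mb M n).det * (Mb M n).det = 1 := by
  have h2 : (M n).det = 4 * (Mb M n).det := by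
    rw [M_eq heven n, Matrix.det_smul]
    norm_num
  have hd : (Mb M n).det = 1 ∨ (Mb M n).det = -1 := by
    rcases hdet n with h | h <;> (rw [h2] at h; omega)
  rcases hd with h | h <;> rw [h] <;> norm_num

lemma Mb_mul_Cm (heven : ∀ n i j, 2 ∣ M n i j)
    (hdet : ∀ n, (M n).det = 4 ∨ (M n).det = -4) (n : ℕ) :
    Mb M n * Cm M n = 1 := by
  rw [Cm, Matrix.mul_smul, Matrix.mul_adjugate, smul_smul, det_Mb_sq heven hdet, one_smul]

lemma Cm_mul_Mb (heven : ∀ n i j, 2 ∣ M n i j)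
    (hdet : ∀ n, (M n).det = 4 ∨ (M n).det = -4) (n : ℕ) :
    Cm M n * Mb M n = 1 := by
  rw [Cm, Matrix.smul_mul, Matrix.adjugate_mul, smul_smul, det_Mb_sq heven hdet, one_smul]

lemma NP_succ (n : ℕ) : NP M (n + 1) = NP M n * Cm M n := by
  rw [NP, NP, List.range_succ, List.map_append, List.prod_append]
  simp

lemma QP_succ (n : ℕ) : QP M (n + 1) = Mb M n * QP M n := by
  rw [QP, QP, List.range_succ, List.map_append, List.reverse_append]
  simp

lemma NP_mul_QP (heven : ∀ n i j, 2 ∣ M n i j)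
    (hdet : ∀ n, (M n).det = 4 ∨ (M n).det = -4) (n : ℕ) :
    NP M n * QP M n = 1 := by
  induction n with
  | zero => simp [NP, QP]
  | succ n ih =>
    rw [NP_succ, QP_succ, mul_assoc, ← mul_assoc (Cm M n), Cm_mul_Mb heven hdet, one_mul, ih]

lemma QP_mul_NP (heven : ∀ n i j, 2 ∣ M n i j)
    (hdet : ∀ n, (M n).det = 4 ∨ (M n).det = -4) (n : ℕ) :
    QP M n * NP M n = 1 := by
  induction n with
  | zero => simp [NP, QP]
  | succ n ih =>
    rw [NP_succ, QP_succ, mul_assoc, ← mul_assoc (QP M n), ih, one_mul,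
      Mb_mul_Cm heven hdet]

lemma castM_mul (A B : Matrix (Fin 2) (Fin 2) ℤ) :
    (A * B).map (Int.cast : ℤ → ℝ) = A.map Int.cast * B.map Int.cast := by
  have := Matrix.map_mul (L := A) (M := B) (f := Int.castRingHom ℝ)
  simpa using this

lemma castM_one : (1 : Matrix (Fin 2) (Fin 2) ℤ).map (Int.cast : ℤ → ℝ) = 1 :=
  Matrix.map_one _ (by simp) (by simp)

lemma Minv_eq (heven : ∀ n i j, 2 ∣ M n i j)
    (hdet : ∀ n, (M n).det = 4 ∨ (M n).det = -4) (n : ℕ) :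
    ((M n).map (Int.cast : ℤ → ℝ))⁻¹ = (2⁻¹ : ℝ) • (Cm M n).map Int.cast := by
  apply Matrix.inv_eq_right_inv
  have hcast : (M n).map (Int.cast : ℤ → ℝ) = (2 : ℝ) • (Mb M n).map Int.cast := by
    ext i j
    obtain ⟨c, hc⟩ := heven n i j
    simp only [Matrix.map_apply, Matrix.smul_apply, Mb, Matrix.of_apply, smul_eq_mul, hc,
      Int.mul_ediv_cancel_left c (two_ne_zero)]
    push_cast
    ring
  rw [hcast, Matrix.smul_mul, Matrix.mul_smul, smul_smul, ← castM_mul,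
    Mb_mul_Cm heven hdet, castM_one]
  norm_num

lemma BinvZ_eq (heven : ∀ n i j, 2 ∣ M n i j)
    (hdet : ∀ n, (M n).det = 4 ∨ (M n).det = -4) (n : ℕ) :
    BinvZ M n = ((2 : ℝ) ^ n)⁻¹ • (NP M n).map (Int.cast : ℤ → ℝ) := by
  induction n with
  | zero => simp [BinvZ, NP, castM_one]
  | succ n ih =>
    have hstep : BinvZ M (n + 1) = BinvZ M n * ((M n).map (Int.cast : ℤ → ℝ))⁻¹ := by
      rw [BinvZ, BinvZ, List.range_succ, List.map_append, List.prod_append]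
      simp
    rw [hstep, ih, Minv_eq heven hdet n, Matrix.smul_mul, Matrix.mul_smul, smul_smul,
      NP_succ, castM_mul]
    congr 1
    rw [pow_succ, mul_inv]

lemma dot_pt (heven : ∀ n i j, 2 ∣ M n i j)
    (hdet : ∀ n, (M n).det = 4 ∨ (M n).det = -4) (t : ℤ) (j : ℕ) (ξ : E2) (i : Fin 4) :
    dot ((BinvZ M (j + 1)).mulVec ((t : ℝ) • scrDv i)) ξ
      = ((t : ℝ) / 2 ^ (j + 1))
        * dot (scrDv i) (((NP M (j + 1)).map (Int.cast : ℤ → ℝ))ᵀ.mulVec ξ) := by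
  rw [BinvZ_eq heven hdet, Matrix.smul_mulVec, Matrix.mulVec_smul, dot_smul_left,
    dot_smul_left, dot_mulVec]
  ring

lemma FT2_nu (heven : ∀ n i j, 2 ∣ M n i j)
    (hdet : ∀ n, (M n).det = 4 ∨ (M n).det = -4) (t : ℤ) (j : ℕ) (ξ : E2) :
    FT2 ((4 : ℝ≥0∞)⁻¹ • ∑ i : Fin 4,
        Measure.dirac ((BinvZ M (j + 1)).mulVec ((t : ℝ) • scrDv i))) ξ
    = (4⁻¹ : ℂ) * quadSum
        (((t : ℝ) / 2 ^ (j + 1)) * (((NP M (j + 1)).map (Int.cast : ℤ → ℝ))ᵀ.mulVec ξ 0))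
        (((t : ℝ) / 2 ^ (j + 1)) * (((NP M (j + 1)).map (Int.cast : ℤ → ℝ))ᵀ.mulVec ξ 1)) := by
  set y := ((NP M (j + 1)).map (Int.cast : ℤ → ℝ))ᵀ.mulVec ξ with hy
  set c := (t : ℝ) / 2 ^ (j + 1) with hc
  have h0 : dot ((BinvZ M (j + 1)).mulVec ((t : ℝ) • scrDv 0)) ξ = 0 := by
    rw [dot_pt heven hdet, show dot (scrDv 0) y = 0 by norm_num [dot, scrDv, Fin.sum_univ_two]]
    ring
  have h1 : dot ((BinvZ M (j + 1)).mulVec ((t : ℝ) • scrDv 1)) ξ = c * y 0 := by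
    rw [dot_pt heven hdet, show dot (scrDv 1) y = y 0 by norm_num [dot, scrDv, Fin.sum_univ_two]]
  have h2 : dot ((BinvZ M (j + 1)).mulVec ((t : ℝ) • scrDv 2)) ξ = c * y 1 := by
    rw [dot_pt heven hdet, show dot (scrDv 2) y = y 1 by simp [dot, scrDv, Fin.sum_univ_two]]
  have h3 : dot ((BinvZ M (j + 1)).mulVec ((t : ℝ) • scrDv 3)) ξ = -(c * y 0 + c * y 1) := by
    rw [dot_pt heven hdet,
      show dot (scrDv 3) y = -(y 0 + y 1) by
        have : dot (scrDv 3) y = -1 * y 0 + -1 * y 1 := by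
          simp [dot, scrDv, Fin.sum_univ_two]
        rw [this]; ring]
    ring
  rw [FT2_def, integral_smul_measure, integral_finset_sum_measure (fun i _ => integrable_eC ξ)]
  simp_rw [integral_dirac]
  rw [Fin.sum_univ_four]
  rw [show ∀ (p : E2), eC (dot p ξ) = eC (dot p ξ) from fun _ => rfl]
  rw [h0, h1, h2, h3, eC_zero]
  rw [quadSum]
  have htr : ((4 : ℝ≥0∞)⁻¹).toReal = (4 : ℝ)⁻¹ := by
    rw [ENNReal.toReal_inv]; norm_num
  rw [htr, Complex.real_smul]
  push_cast
  ring

-- ===================== arithmetic part =====================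

lemma cast_mulVec_div (A : Matrix (Fin 2) (Fin 2) ℤ) (v : Fin 2 → ℤ) (s : ℝ) (l : Fin 2) :
    (A.map (Int.cast : ℤ → ℝ)).mulVec (fun i => (v i : ℝ) / s) l = ((A.mulVec v) l : ℝ) / s := by
  simp only [Matrix.mulVec, dotProduct, Matrix.map_apply, Fin.sum_univ_two]
  push_cast
  ring

lemma mulVec_intscale (A : Matrix (Fin 2) (Fin 2) ℤ) (c : ℤ) (u : Fin 2 → ℤ) (l : Fin 2) :
    (A.mulVec fun i => c * u i) l = c * A.mulVec u l := by
  simp only [Matrix.mulVec, dotProduct, Fin.sum_univ_two]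
  ring

lemma transpose_cast (A : Matrix (Fin 2) (Fin 2) ℤ) :
    (A.map (Int.cast : ℤ → ℝ))ᵀ = Aᵀ.map (Int.cast : ℤ → ℝ) := by
  ext i j; simp [Matrix.transpose_apply, Matrix.map_apply]

/-- extraction of the 2-adic part of a nonzero integer vector -/
lemma exists_odd_rep_aux : ∀ (N : ℕ) (k : Fin 2 → ℤ), (k 0).natAbs + (k 1).natAbs ≤ N →
    k ≠ 0 → ∃ (e : ℕ) (u : Fin 2 → ℤ), (Odd (u 0) ∨ Odd (u 1)) ∧ ∀ i, k i = 2 ^ e * u i := by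
  intro N
  induction N with
  | zero =>
    intro k hN hk
    exfalso
    apply hk
    have h0 : k 0 = 0 := by omega
    have h1 : k 1 = 0 := by omega
    funext i
    fin_cases i
    · exact h0
    · exact h1
  | succ N ih =>
    intro k hN hk
    by_cases h : Odd (k 0) ∨ Odd (k 1)
    · exact ⟨0, k, h, fun i => by ring⟩
    · push_neg at h
      obtain ⟨h0, h1⟩ := h
      rw [Int.not_odd_iff_even] at h0 h1
      set k' : Fin 2 → ℤ := fun i => k i / 2 with hk'
      have hev : ∀ i : Fin 2, k i = 2 * k' i := by
        intro i
        fin_cases i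
        · obtain ⟨c, hc⟩ := h0; show k 0 = 2 * (k 0 / 2); omega
        · obtain ⟨c, hc⟩ := h1; show k 1 = 2 * (k 1 / 2); omega
      have hk'0 : k' ≠ 0 := by
        intro h0'
        apply hk
        funext i
        rw [hev i, congrFun h0' i]
        simp
      have hpos : (k' 0).natAbs + (k' 1).natAbs ≠ 0 := by
        intro hz
        apply hk'0
        have h0' : k' 0 = 0 := by omega
        have h1' : k' 1 = 0 := by omega
        funext i
        fin_cases i
        · exact h0'
        · exact h1'
      have hlt : (k' 0).natAbs + (k' 1).natAbs ≤ N := by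
        have e0 := hev 0
        have e1 := hev 1
        omega
      obtain ⟨e, u, hu, hku⟩ := ih k' hlt hk'0
      exact ⟨e + 1, u, hu, fun i => by rw [hev i, hku i]; ring⟩

lemma exists_odd_rep (k : Fin 2 → ℤ) (hk : k ≠ 0) :
    ∃ (e : ℕ) (u : Fin 2 → ℤ), (Odd (u 0) ∨ Odd (u 1)) ∧ ∀ i, k i = 2 ^ e * u i :=
  exists_odd_rep_aux ((k 0).natAbs + (k 1).natAbs) k le_rfl hk

lemma odd_coord_of_mulVec (A B : Matrix (Fin 2) (Fin 2) ℤ) (hAB : A * B = 1)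
    (u : Fin 2 → ℤ) (hu : Odd (u 0) ∨ Odd (u 1)) :
    Odd ((Aᵀ.mulVec u) 0) ∨ Odd ((Aᵀ.mulVec u) 1) := by
  by_contra hcon
  push_neg at hcon
  obtain ⟨h0, h1⟩ := hcon
  rw [Int.not_odd_iff_even] at h0 h1
  have hrec : Bᵀ.mulVec (Aᵀ.mulVec u) = u := by
    rw [Matrix.mulVec_mulVec, ← Matrix.transpose_mul, hAB, Matrix.transpose_one,
      Matrix.one_mulVec]
  have heven : ∀ i : Fin 2, Even (u i) := by
    intro i
    rw [← hrec]
    show Even (∑ l, Bᵀ i l * (Aᵀ.mulVec u) l)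
    rw [Fin.sum_univ_two]
    exact (h0.mul_left _).add (h1.mul_left _)
  rcases hu with hu | hu
  · exact (Int.not_odd_iff_even.mpr (heven 0)) hu
  · exact (Int.not_odd_iff_even.mpr (heven 1)) hu

lemma mulVec_ne_zero (A B : Matrix (Fin 2) (Fin 2) ℤ) (hAB : A * B = 1)
    (v : Fin 2 → ℤ) (hv : v ≠ 0) : Aᵀ.mulVec v ≠ 0 := by
  intro h0
  apply hv
  have hrec : Bᵀ.mulVec (Aᵀ.mulVec v) = v := by
    rw [Matrix.mulVec_mulVec, ← Matrix.transpose_mul, hAB, Matrix.transpose_one,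
      Matrix.one_mulVec]
  rw [← hrec, h0, Matrix.mulVec_zero]

/-- Forward direction: for a nonzero integer vector `k`, some factor vanishes at `k/t`. -/
lemma exists_factor_zero (heven : ∀ n i j, 2 ∣ M n i j)
    (hdet : ∀ n, (M n).det = 4 ∨ (M n).det = -4) (t : ℤ) (ht0 : (t : ℝ) ≠ 0)
    (k : Fin 2 → ℤ) (hk : k ≠ 0) :
    ∃ e : ℕ, FT2 ((4 : ℝ≥0∞)⁻¹ • ∑ i : Fin 4,
        Measure.dirac ((BinvZ M (e + 1)).mulVec ((t : ℝ) • scrDv i)))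
      (fun i => (k i : ℝ) / (t : ℝ)) = 0 := by
  obtain ⟨e, u, hu, hku⟩ := exists_odd_rep k hk
  refine ⟨e, ?_⟩
  rw [FT2_nu heven hdet]
  set w : Fin 2 → ℤ := (NP M (e + 1))ᵀ.mulVec u with hw
  have hyl : ∀ l : Fin 2, ((NP M (e + 1)).map (Int.cast : ℤ → ℝ))ᵀ.mulVec
      (fun i => (k i : ℝ) / (t : ℝ)) l = (2 ^ e * w l : ℝ) / (t : ℝ) := by
    intro l
    rw [transpose_cast, cast_mulVec_div]
    congr 1
    have : (NP M (e + 1))ᵀ.mulVec k = fun l => 2 ^ e * w l := by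
      funext l
      rw [hw, ← mulVec_intscale]
      congr 1
      funext i
      exact hku i
    rw [this]
    push_cast
    ring
  have hcy : ∀ l : Fin 2, (t : ℝ) / 2 ^ (e + 1)
      * (((NP M (e + 1)).map (Int.cast : ℤ → ℝ))ᵀ.mulVec (fun i => (k i : ℝ) / (t : ℝ)) l)
      = (w l : ℝ) / 2 := by
    intro l
    rw [hyl l]
    field_simp
    ring
  rw [hcy 0, hcy 1]
  have hwodd : Odd (w 0) ∨ Odd (w 1) :=
    odd_coord_of_mulVec _ (QP M (e + 1)) (NP_mul_QP heven hdet (e + 1)) u hu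
  rw [quadSum_zero hwodd, mul_zero]

/-- Backward direction: a vanishing factor forces `ξ ∈ (1/t)(ℤ²∖{0})`. -/
lemma factor_zero_imp (heven : ∀ n i j, 2 ∣ M n i j)
    (hdet : ∀ n, (M n).det = 4 ∨ (M n).det = -4) (t : ℤ) (ht0 : (t : ℝ) ≠ 0)
    (j : ℕ) (ξ : E2)
    (h : FT2 ((4 : ℝ≥0∞)⁻¹ • ∑ i : Fin 4,
        Measure.dirac ((BinvZ M (j + 1)).mulVec ((t : ℝ) • scrDv i))) ξ = 0) :
    ∃ k : Fin 2 → ℤ, k ≠ 0 ∧ ξ = fun i => (k i : ℝ) / (t : ℝ) := by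
  rw [FT2_nu heven hdet] at h
  have hq : quadSum
      (((t : ℝ) / 2 ^ (j + 1)) * (((NP M (j + 1)).map (Int.cast : ℤ → ℝ))ᵀ.mulVec ξ 0))
      (((t : ℝ) / 2 ^ (j + 1)) * (((NP M (j + 1)).map (Int.cast : ℤ → ℝ))ᵀ.mulVec ξ 1)) = 0 := by
    rcases mul_eq_zero.mp h with h' | h'
    · norm_num at h'
    · exact h'
  obtain ⟨p, q, hpq, hp, hq2⟩ := quadSum_zero_imp hq
  set y := ((NP M (j + 1)).map (Int.cast : ℤ → ℝ))ᵀ.mulVec ξ with hy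
  set r : Fin 2 → ℤ := ![p, q] with hr
  have hy0 : y 0 = ((2 ^ j * r 0 : ℤ) : ℝ) / (t : ℝ) := by
    have hstep : y 0 = (p : ℝ) / 2 * (2 ^ (j + 1) / (t : ℝ)) := by
      field_simp at hp ⊢
      linarith [hp]
    rw [hstep, show r 0 = p from rfl]
    push_cast
    field_simp
    ring
  have hy1 : y 1 = ((2 ^ j * r 1 : ℤ) : ℝ) / (t : ℝ) := by
    have hstep : y 1 = (q : ℝ) / 2 * (2 ^ (j + 1) / (t : ℝ)) := by
      field_simp at hq2 ⊢
      linarith [hq2]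
    rw [hstep, show r 1 = q from rfl]
    push_cast
    field_simp
    ring
  have hyl : ∀ l : Fin 2, y l = ((2 ^ j * r l : ℤ) : ℝ) / (t : ℝ) := by
    intro l
    fin_cases l
    · exact hy0
    · exact hy1
  -- recover ξ
  have hrec : ξ = ((QP M (j + 1)).map (Int.cast : ℤ → ℝ))ᵀ.mulVec y := by
    rw [hy, Matrix.mulVec_mulVec, transpose_cast, transpose_cast, ← castM_mul,
      ← Matrix.transpose_mul, NP_mul_QP heven hdet, Matrix.transpose_one, castM_one,
      Matrix.one_mulVec]
  set kk : Fin 2 → ℤ := (QP M (j + 1))ᵀ.mulVec (fun i => 2 ^ j * r i) with hkk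
  refine ⟨kk, ?_, ?_⟩
  · apply mulVec_ne_zero _ (NP M (j + 1)) (QP_mul_NP heven hdet (j + 1))
    intro h0
    have h00 : (2 : ℤ) ^ j * r 0 = 0 := congrFun h0 0
    have h01 : (2 : ℤ) ^ j * r 1 = 0 := congrFun h0 1
    have h2j : (2 : ℤ) ^ j ≠ 0 := by positivity
    have hr0 : r 0 = 0 := by
      rcases mul_eq_zero.mp h00 with h' | h'
      · exact absurd h' h2j
      · exact h'
    have hr1 : r 1 = 0 := by
      rcases mul_eq_zero.mp h01 with h' | h'
      · exact absurd h' h2j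
      · exact h'
    have hrp : r 0 = p := rfl
    have hrq : r 1 = q := rfl
    rcases hpq with hodd | hodd
    · obtain ⟨c, hc⟩ := hodd; omega
    · obtain ⟨c, hc⟩ := hodd; omega
  · funext l
    rw [hrec]
    have hyfun : y = fun i => ((2 ^ j * r i : ℤ) : ℝ) / (t : ℝ) := funext hyl
    rw [hyfun, transpose_cast]
    exact cast_mulVec_div (QP M (j + 1))ᵀ (fun i => 2 ^ j * r i) (t : ℝ) l

end S11
end

open S11

/-- let `{M_n} ⊂ GL(2,2ℤ)` be expanding with `|det M_n| = 4`, `t` odd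
with `|t| > 1`, `D_n = t𝒟`, and let `μ` be the infinite convolution
`δ_{M₁⁻¹D₁} * δ_{M₁⁻¹M₂⁻¹D₂} * ⋯` (a probability measure which is the weak limit of
the partial convolutions). Then `Z(μ̂) = (1/t)(ℤ² \ {0})`, the integer periodic zero
set contains `(1/t)𝔽̊_{|t|}`, and in particular it is nonempty. -/
theorem stmt_11 (M : ℕ → Matrix (Fin 2) (Fin 2) ℤ) (t : ℤ)
    (heven : ∀ n i j, 2 ∣ M n i j)
    (hdet : ∀ n, (M n).det = 4 ∨ (M n).det = -4)
    (hexp : ∀ n, ∀ z ∈ spectrum ℂ ((M n).map (Int.cast : ℤ → ℂ)), 1 < ‖z‖)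
    (ht : Odd t) (ht1 : 1 < |t|)
    (μ : Measure (Fin 2 → ℝ)) [IsProbabilityMeasure μ]
    (hμ : ∀ f : BoundedContinuousFunction (Fin 2 → ℝ) ℝ,
      Tendsto (fun n => ∫ x, f x ∂ (partialConv (fun j =>
          (4 : ℝ≥0∞)⁻¹ • ∑ i : Fin 4,
            Measure.dirac ((BinvZ M (j + 1)).mulVec ((t : ℝ) • scrDv i))) n))
        atTop (𝓝 (∫ x, f x ∂ μ))) :
    ({ξ : Fin 2 → ℝ | FT2 μ ξ = 0}
        = {ξ : Fin 2 → ℝ | ∃ k : Fin 2 → ℤ, k ≠ 0 ∧ ξ = fun i => (k i : ℝ) / (t : ℝ)}) ∧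
    (∀ ℓ : Fin 2 → ℤ, ℓ ≠ 0 → (∀ i, 0 ≤ ℓ i ∧ ℓ i < |t|) →
      (fun i => (ℓ i : ℝ) / (t : ℝ)) ∈
        {ξ : Fin 2 → ℝ | ∀ k : Fin 2 → ℤ, FT2 μ (ξ + fun i => (k i : ℝ)) = 0}) ∧
    {ξ : Fin 2 → ℝ | ∀ k : Fin 2 → ℤ, FT2 μ (ξ + fun i => (k i : ℝ)) = 0}.Nonempty := by
  
  classical
  have htne : t ≠ 0 := by intro h; rw [h] at ht1; norm_num at ht1
  have ht0 : (t : ℝ) ≠ 0 := Int.cast_ne_zero.mpr htne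
  set nu : ℕ → Measure (Fin 2 → ℝ) := fun j =>
    (4 : ℝ≥0∞)⁻¹ • ∑ i : Fin 4,
      Measure.dirac ((BinvZ M (j + 1)).mulVec ((t : ℝ) • scrDv i)) with hnudef
  have hprobnu : ∀ j, IsProbabilityMeasure (nu j) := by
    intro j
    rw [hnudef]
    constructor
    simp only [Measure.smul_apply, smul_eq_mul]
    rw [show ((∑ i : Fin 4, Measure.dirac ((BinvZ M (j + 1)).mulVec ((t : ℝ) • scrDv i)))
        Set.univ) = ∑ i : Fin 4, (Measure.dirac
          ((BinvZ M (j + 1)).mulVec ((t : ℝ) • scrDv i))) Set.univ from by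
      simp [MeasureTheory.Measure.coe_finset_sum, Finset.sum_apply]]
    simp only [measure_univ]
    rw [Finset.sum_const, Finset.card_univ, Fintype.card_fin]
    simp
    norm_num [ENNReal.inv_mul_cancel]
  have hprobP : ∀ n, IsProbabilityMeasure (partialConv nu n) :=
    fun n => isProbabilityMeasure_partialConv hprobnu n
  -- pointwise convergence of Fourier transforms
  have hFTconv : ∀ ξ : Fin 2 → ℝ,
      Tendsto (fun n => FT2 (partialConv nu n) ξ) atTop (𝓝 (FT2 μ ξ)) := by
    intro ξ
    have hcosc : Continuous fun x : Fin 2 → ℝ => Real.cos (2 * Real.pi * dot x ξ) :=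
      Real.continuous_cos.comp (continuous_const.mul (continuous_dotl ξ))
    have hsinc : Continuous fun x : Fin 2 → ℝ => Real.sin (2 * Real.pi * dot x ξ) :=
      Real.continuous_sin.comp (continuous_const.mul (continuous_dotl ξ))
    have hc : Tendsto (fun n => ∫ x, Real.cos (2 * Real.pi * dot x ξ) ∂(partialConv nu n))
        atTop (𝓝 (∫ x, Real.cos (2 * Real.pi * dot x ξ) ∂μ)) :=
      hμ (BoundedContinuousFunction.ofNormedAddCommGroup _ hcosc 1
        (fun x => by rw [Real.norm_eq_abs]; exact Real.abs_cos_le_one _))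
    have hs : Tendsto (fun n => ∫ x, Real.sin (2 * Real.pi * dot x ξ) ∂(partialConv nu n))
        atTop (𝓝 (∫ x, Real.sin (2 * Real.pi * dot x ξ) ∂μ)) :=
      hμ (BoundedContinuousFunction.ofNormedAddCommGroup _ hsinc 1
        (fun x => by rw [Real.norm_eq_abs]; exact Real.abs_sin_le_one _))
    have hneq : ∀ n, FT2 (partialConv nu n) ξ
        = ((∫ x, Real.cos (2 * Real.pi * dot x ξ) ∂(partialConv nu n) : ℝ) : ℂ)
          + ((∫ x, Real.sin (2 * Real.pi * dot x ξ) ∂(partialConv nu n) : ℝ) : ℂ)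
            * Complex.I := by
      intro n
      haveI := hprobP n
      exact FT2_re_im _ ξ
    have hgoal : Tendsto (fun n =>
        ((∫ x, Real.cos (2 * Real.pi * dot x ξ) ∂(partialConv nu n) : ℝ) : ℂ)
          + ((∫ x, Real.sin (2 * Real.pi * dot x ξ) ∂(partialConv nu n) : ℝ) : ℂ)
            * Complex.I) atTop (𝓝 (FT2 μ ξ)) := by
      have h1 : FT2 μ ξ = ((∫ x, Real.cos (2 * Real.pi * dot x ξ) ∂μ : ℝ) : ℂ)
          + ((∫ x, Real.sin (2 * Real.pi * dot x ξ) ∂μ : ℝ) : ℂ) * Complex.I :=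
        @FT2_re_im μ ‹IsProbabilityMeasure μ› ξ
      rw [h1]
      exact ((Complex.continuous_ofReal.tendsto _).comp hc).add
        (((Complex.continuous_ofReal.tendsto _).comp hs).mul_const Complex.I)
    exact Tendsto.congr (fun n => (hneq n).symm) hgoal
  have hPprod : ∀ (n : ℕ) (ξ : Fin 2 → ℝ),
      FT2 (partialConv nu n) ξ = ∏ j ∈ Finset.range n, FT2 (nu j) ξ :=
    fun n ξ => FT2_partialConv hprobnu n ξ
  have hPconv : ∀ ξ : Fin 2 → ℝ,
      Tendsto (fun n => ∏ j ∈ Finset.range n, FT2 (nu j) ξ) atTop (𝓝 (FT2 μ ξ)) :=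
    fun ξ => (hFTconv ξ).congr (fun n => hPprod n ξ)
  -- forward inclusion
  have hzero_of_S : ∀ k : Fin 2 → ℤ, k ≠ 0 → FT2 μ (fun i => (k i : ℝ) / (t : ℝ)) = 0 := by
    intro k hk
    obtain ⟨e, he⟩ := exists_factor_zero heven hdet t ht0 k hk
    have he' : FT2 (nu e) (fun i => (k i : ℝ) / (t : ℝ)) = 0 := by
      rw [hnudef]; exact he
    have h0 : Tendsto (fun n => ∏ j ∈ Finset.range n, FT2 (nu j) (fun i => (k i : ℝ) / (t : ℝ)))
        atTop (𝓝 0) := by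
      apply Tendsto.congr' _ tendsto_const_nhds
      filter_upwards [Filter.eventually_ge_atTop (e + 1)] with n hn
      exact (Finset.prod_eq_zero (Finset.mem_range.mpr (by omega)) he').symm
    exact tendsto_nhds_unique (hPconv _) h0
  -- backward inclusion
  have hS_of_zero : ∀ ξ : Fin 2 → ℝ, FT2 μ ξ = 0 →
      ∃ k : Fin 2 → ℤ, k ≠ 0 ∧ ξ = fun i => (k i : ℝ) / (t : ℝ) := by
    intro ξ hz
    by_contra hnot
    push_neg at hnot
    have hAne : ∀ (m j : ℕ), FT2 (nu j) (fun i => ξ i / 2 ^ m) ≠ 0 := by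
      intro m j hA0
      have hA0' : FT2 ((4 : ℝ≥0∞)⁻¹ • ∑ i : Fin 4,
          Measure.dirac ((BinvZ M (j + 1)).mulVec ((t : ℝ) • scrDv i)))
          (fun i => ξ i / 2 ^ m) = 0 := by
        rw [hnudef] at hA0
        exact hA0
      obtain ⟨k, hk0, hkeq⟩ := factor_zero_imp heven hdet t ht0 j _ hA0'
      refine hnot (fun i => 2 ^ m * k i) ?_ ?_
      · intro hz0
        apply hk0
        funext i
        have hi : (2 : ℤ) ^ m * k i = 0 := congrFun hz0 i
        have h2m : (2 : ℤ) ^ m ≠ 0 := by positivity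
        rcases mul_eq_zero.mp hi with h' | h'
        · exact absurd h' h2m
        · exact h'
      · funext i
        have h1 := congrFun hkeq i
        push_cast
        field_simp at h1 ⊢
        linarith
    have hAξne : ∀ j, FT2 (nu j) ξ ≠ 0 := by
      intro j
      have h' := hAne 0 j
      rw [show (fun i => ξ i / 2 ^ (0 : ℕ)) = ξ from funext fun i => by norm_num] at h'
      exact h'
    have hcont := @continuous_FT2 μ ‹IsProbabilityMeasure μ›
    have hlim0 : Tendsto (fun m : ℕ => (fun i => ξ i / 2 ^ m : Fin 2 → ℝ)) atTop (𝓝 0) := by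
      rw [tendsto_pi_nhds]
      intro i
      have hbase : Tendsto (fun m : ℕ => ξ i * (2⁻¹ : ℝ) ^ m) atTop (𝓝 (ξ i * 0)) :=
        tendsto_const_nhds.mul (tendsto_pow_atTop_nhds_zero_of_lt_one (by norm_num) (by norm_num))
      have : (fun m : ℕ => ξ i / 2 ^ m) = fun m : ℕ => ξ i * (2⁻¹ : ℝ) ^ m := by
        funext m
        rw [inv_pow, div_eq_mul_inv]
      rw [this]
      simpa using hbase
    have hFT1 : Tendsto (fun m : ℕ => FT2 μ (fun i => ξ i / 2 ^ m)) atTop (𝓝 1) := by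
      have h1 : FT2 μ 0 = 1 := @FT2_zero μ ‹IsProbabilityMeasure μ›
      rw [← h1]
      exact (hcont.tendsto 0).comp hlim0
    obtain ⟨m, hm⟩ : ∃ m : ℕ, FT2 μ (fun i => ξ i / 2 ^ m) ≠ 0 :=
      (hFT1.eventually_ne one_ne_zero).exists
    set η : Fin 2 → ℝ := fun i => ξ i / 2 ^ m with hη
    have hξη : (fun i => 2 ^ m * η i) = ξ := by
      funext i
      rw [hη]
      field_simp
    have hPξ : ∀ n, (∏ j ∈ Finset.range n, FT2 (nu j) ξ) ≠ 0 :=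
      fun n => Finset.prod_ne_zero_iff.mpr (fun j _ => hAξne j)
    have hPη : ∀ n, (∏ j ∈ Finset.range n, FT2 (nu j) η) ≠ 0 :=
      fun n => Finset.prod_ne_zero_iff.mpr (fun j _ => hAne m j)
    have hkey : ∀ n : ℕ,
        1 ≤ 4 ^ m * (1 - (FT2 μ η / ∏ j ∈ Finset.range n, FT2 (nu j) η).re) := by
      intro n
      set σ : ℕ → Measure (Fin 2 → ℝ) := fun mm => partialConv (fun j => nu (n + j)) mm
        with hσdef
      have hprobσ : ∀ mm, IsProbabilityMeasure (σ mm) :=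
        fun mm => isProbabilityMeasure_partialConv (fun j => hprobnu (n + j)) mm
      have hQ : ∀ (mm : ℕ) (ζ : Fin 2 → ℝ),
          FT2 (σ mm) ζ = ∏ j ∈ Finset.range mm, FT2 (nu (n + j)) ζ :=
        fun mm ζ => FT2_partialConv (fun j => hprobnu (n + j)) mm ζ
      have hsplit : ∀ (mm : ℕ) (ζ : Fin 2 → ℝ),
          (∏ j ∈ Finset.range (n + mm), FT2 (nu j) ζ)
            = (∏ j ∈ Finset.range n, FT2 (nu j) ζ) * ∏ j ∈ Finset.range mm, FT2 (nu (n + j)) ζ :=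
        fun mm ζ => Finset.prod_range_add _ n mm
      have hineq : ∀ mm, 1 - (FT2 (σ mm) ξ).re ≤ 4 ^ m * (1 - (FT2 (σ mm) η).re) := by
        intro mm
        haveI := hprobσ mm
        have hdb := doubling_pow (σ mm) m η
        rw [hξη] at hdb
        exact hdb
      have hchain : ∀ (ζ : Fin 2 → ℝ), (∀ n', (∏ j ∈ Finset.range n', FT2 (nu j) ζ) ≠ 0) →
          Tendsto (fun mm => FT2 (σ mm) ζ) atTop
            (𝓝 (FT2 μ ζ / ∏ j ∈ Finset.range n, FT2 (nu j) ζ)) := by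
        intro ζ hPζ
        have heq : ∀ mm, FT2 (σ mm) ζ
            = (∏ j ∈ Finset.range (n + mm), FT2 (nu j) ζ) / ∏ j ∈ Finset.range n, FT2 (nu j) ζ := by
          intro mm
          rw [hQ, hsplit, mul_comm, mul_div_assoc, div_self (hPζ n), mul_one]
        apply Tendsto.congr (fun mm => (heq mm).symm)
        have hcomp : Tendsto (fun mm => ∏ j ∈ Finset.range (n + mm), FT2 (nu j) ζ) atTop
            (𝓝 (FT2 μ ζ)) :=
          (hPconv ζ).comp (tendsto_atTop_mono (fun mm => Nat.le_add_left mm n) tendsto_id)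
        exact hcomp.div_const _
      have hQξlim : Tendsto (fun mm => FT2 (σ mm) ξ) atTop (𝓝 0) := by
        have := hchain ξ hPξ
        rw [hz, zero_div] at this
        exact this
      have hQηlim := hchain η hPη
      have hL : Tendsto (fun mm => 1 - (FT2 (σ mm) ξ).re) atTop (𝓝 1) := by
        have h' : Tendsto (fun mm => (FT2 (σ mm) ξ).re) atTop (𝓝 0) := by
          simpa [Function.comp_def] using (Complex.continuous_re.tendsto _).comp hQξlim
        simpa using (tendsto_const_nhds (x := (1 : ℝ))).sub h'
      have hR : Tendsto (fun mm => 4 ^ m * (1 - (FT2 (σ mm) η).re)) atTop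
          (𝓝 (4 ^ m * (1 - (FT2 μ η / ∏ j ∈ Finset.range n, FT2 (nu j) η).re))) :=
        (tendsto_const_nhds (x := (4 : ℝ) ^ m)).mul ((tendsto_const_nhds (x := (1 : ℝ))).sub
          ((Complex.continuous_re.tendsto _).comp hQηlim))
      exact le_of_tendsto_of_tendsto' hL hR hineq
    have hfrac : Tendsto (fun n => FT2 μ η / ∏ j ∈ Finset.range n, FT2 (nu j) η) atTop (𝓝 1) := by
      have hdiv := Tendsto.div (tendsto_const_nhds (x := FT2 μ η)) (hPconv η) hm
      rw [div_self hm] at hdiv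
      exact hdiv
    have hlim : Tendsto (fun n =>
        4 ^ m * (1 - (FT2 μ η / ∏ j ∈ Finset.range n, FT2 (nu j) η).re)) atTop (𝓝 0) := by
      have h1 : Tendsto (fun n => (FT2 μ η / ∏ j ∈ Finset.range n, FT2 (nu j) η).re) atTop
          (𝓝 1) := by
        simpa [Function.comp_def] using (Complex.continuous_re.tendsto _).comp hfrac
      have := (tendsto_const_nhds (x := (4 : ℝ) ^ m)).mul
        ((tendsto_const_nhds (x := (1 : ℝ))).sub h1)
      simpa using this
    have hcontra : (1 : ℝ) ≤ 0 := le_of_tendsto_of_tendsto' tendsto_const_nhds hlim hkey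
    linarith
  -- conclusions
  have hpart2 : ∀ ℓ : Fin 2 → ℤ, ℓ ≠ 0 → (∀ i, 0 ≤ ℓ i ∧ ℓ i < |t|) →
      (fun i => (ℓ i : ℝ) / (t : ℝ)) ∈
        {ξ : Fin 2 → ℝ | ∀ k : Fin 2 → ℤ, FT2 μ (ξ + fun i => (k i : ℝ)) = 0} := by
    intro ℓ hℓ hbnd
    intro k
    have hvec : ((fun i => (ℓ i : ℝ) / (t : ℝ)) + fun i => (k i : ℝ))
        = fun i => (((fun i => ℓ i + t * k i) i : ℤ) : ℝ) / (t : ℝ) := by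
      funext i
      simp only [Pi.add_apply]
      push_cast
      field_simp
    rw [hvec]
    apply hzero_of_S
    intro h0
    apply hℓ
    funext i
    have hi : ℓ i + t * k i = 0 := congrFun h0 i
    have hb := hbnd i
    show ℓ i = 0
    by_cases hki : k i = 0
    · rw [hki, mul_zero, add_zero] at hi; exact hi
    · exfalso
      have h1 : 1 ≤ |k i| := Int.one_le_abs hki
      have h2 : |ℓ i| = |t| * |k i| := by
        rw [show ℓ i = -(t * k i) by omega, abs_neg, abs_mul]
      have h3 : |ℓ i| < |t| := by
        rw [abs_of_nonneg hb.1]; exact hb.2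
      nlinarith [abs_nonneg t]
  refine ⟨?_, hpart2, ?_⟩
  · ext ξ
    simp only [Set.mem_setOf_eq]
    constructor
    · exact hS_of_zero ξ
    · rintro ⟨k, hk, rfl⟩
      exact hzero_of_S k hk
  · refine ⟨(fun i => (((fun i : Fin 2 => if i = 0 then (1 : ℤ) else 0) i : ℤ) : ℝ) / (t : ℝ)),
      hpart2 _ ?_ ?_⟩
    · intro h
      have := congrFun h 0
      simp at this
    · intro i
      by_cases h : i = 0 <;> simp [h] <;> omega
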